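/- arXiv:2603.18454 — 2 statements merged into one kernel-verified Lean document; each statement's English description precedes it below -/
import Mathlib

section
/- Let (Ω, 𝒜) be a measurable space, Q a probability measure on Ω, and P a probability measure on Ω with P ≪ Q. Let β > 0 and let ℓ : Ω → ℝ be measurable such that ω ↦ exp(-β·ℓ(ω)) is Q-integrable, ℓ is P-integrable, and D(P‖Q) < ∞. Set Z := ∫ exp(-β·ℓ) dQ (note Z > 0). Then equality -(1/β)·log Z - (1/β)·D(P‖Q) = ∫ ℓ dP holds if and only if the Radon–Nikodym derivative satisfies dP/dQ = exp(-β·ℓ)/Z, Q-almost everywhere. -/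
open MeasureTheory Real

/-!
Let `G` be `Q` tilted by `-βℓ`, i.e. the Gibbs measure with `Q`-density `exp (-βℓ) / Z`.
Then `∫ log (dP/dG) dP = D(P‖Q) + β ∫ ℓ dP + log Z`, so the equality holds iff `D(P‖G) = 0`,
i.e. iff `P = G`, i.e. iff `dP/dQ = dG/dQ = exp (-βℓ) / Z` holds `Q`-almost everywhere.
-/

namespace MeasureTheory

open InformationTheory

variable {α : Type*} {mα : MeasurableSpace α} {μ μ' ν : Measure α}

lemma Measure.eq_of_rnDeriv_ae_eq [μ.HaveLebesgueDecomposition ν]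
    [μ'.HaveLebesgueDecomposition ν] (hμ : μ ≪ ν) (hμ' : μ' ≪ ν)
    (h : μ.rnDeriv ν =ᵐ[ν] μ'.rnDeriv ν) : μ = μ' := by
  rw [← Measure.withDensity_rnDeriv_eq μ ν hμ, ← Measure.withDensity_rnDeriv_eq μ' ν hμ',
    withDensity_congr_ae h]

lemma integral_llr_eq_zero_iff [IsProbabilityMeasure μ] [IsProbabilityMeasure ν] (hμν : μ ≪ ν)
    (h_int : Integrable (llr μ ν) μ) : ∫ x, llr μ ν x ∂μ = 0 ↔ μ = ν := by
  rw [← toReal_klDiv_of_measure_eq hμν (by simp), ENNReal.toReal_eq_zero_iff,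
    or_iff_left (klDiv_ne_top hμν h_int), klDiv_eq_zero_iff]

lemma rnDeriv_toReal_ae_eq_exp_div_iff_eq_tilted [SigmaFinite μ] [SigmaFinite ν] {f : α → ℝ}
    (hμν : μ ≪ ν) (hf : AEMeasurable f ν) :
    (∀ᵐ x ∂ν, (μ.rnDeriv ν x).toReal = exp (f x) / ∫ x, exp (f x) ∂ν) ↔ μ = ν.tilted f := by
  have h_tilted := rnDeriv_tilted_left_self hf
  refine ⟨fun h ↦ Measure.eq_of_rnDeriv_ae_eq hμν (tilted_absolutelyContinuous ν f) ?_, ?_⟩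
  · filter_upwards [h, h_tilted, Measure.rnDeriv_lt_top μ ν] with x hx hx_tilted hx_top
    rw [hx_tilted, ← hx, ENNReal.ofReal_toReal hx_top.ne]
  · rintro rfl
    filter_upwards [h_tilted] with x hx
    have h_nonneg : 0 ≤ exp (f x) / ∫ x, exp (f x) ∂ν :=
      div_nonneg (exp_pos _).le (integral_nonneg fun _ ↦ (exp_pos _).le)
    rw [hx, ENNReal.toReal_ofReal h_nonneg]

end MeasureTheory

theorem gibbs_variational_principle_eq_iff_general
    {Ω : Type*} [MeasurableSpace Ω]
    (P Q : Measure Ω) [IsProbabilityMeasure P] [IsProbabilityMeasure Q]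
    (hPQ : P ≪ Q)
    (β : ℝ) (hβ : 0 < β)
    (ℓ : Ω → ℝ)
    (hexp : Integrable (fun ω => Real.exp (-β * ℓ ω)) Q)
    (hℓP : Integrable ℓ P)
    (hKL : Integrable (fun ω => Real.log ((P.rnDeriv Q ω).toReal)) P)
    (Z : ℝ) (hZ : Z = ∫ ω, Real.exp (-β * ℓ ω) ∂Q) :
    0 < Z ∧
      ((-(1 / β) * Real.log Z
          - (1 / β) * ∫ ω, Real.log ((P.rnDeriv Q ω).toReal) ∂P
            = ∫ ω, ℓ ω ∂P)
        ↔ (∀ᵐ ω ∂Q, (P.rnDeriv Q ω).toReal = Real.exp (-β * ℓ ω) / Z)) := by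
  refine ⟨hZ ▸ integral_exp_pos hexp, ?_⟩
  have hℓQ : AEMeasurable ℓ Q :=
    aemeasurable_of_aemeasurable_exp_mul (neg_ne_zero.2 hβ.ne') hexp.aemeasurable
  have : IsProbabilityMeasure (Q.tilted (-β * ℓ ·)) := isProbabilityMeasure_tilted hexp
  have hβℓP : Integrable (-β * ℓ ·) P := hℓP.const_mul (-β)
  have h_llr := integral_llr_tilted_right hPQ hβℓP hexp hKL
  rw [integral_const_mul, ← hZ] at h_llr
  rw [hZ, rnDeriv_toReal_ae_eq_exp_div_iff_eq_tilted hPQ (hℓQ.const_mul (-β)), ← hZ,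
    ← integral_llr_eq_zero_iff (hPQ.trans (absolutelyContinuous_tilted hexp))
      (integrable_llr_tilted_right hPQ hβℓP hKL hexp), h_llr]
  change _ ↔ ∫ ω, Real.log ((P.rnDeriv Q ω).toReal) ∂P - _ + _ = 0
  field_simp
  constructor <;> intro h <;> linarith

/-- **Equality case of the Gibbs variational principle.** With `P ≪ Q` probability measures,
`β > 0`, `ℓ` measurable with `exp (-β ℓ)` `Q`-integrable, `ℓ` `P`-integrable, finite KL
divergence, and `Z := ∫ exp (-β ℓ) dQ` (which is positive), equality
`-(1/β) log Z - (1/β) D(P‖Q) = ∫ ℓ dP` holds if and only if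
`dP/dQ = exp (-β ℓ) / Z` holds `Q`-almost everywhere. -/
theorem gibbs_variational_principle_eq_iff
    {Ω : Type*} [MeasurableSpace Ω]
    (P Q : Measure Ω) [IsProbabilityMeasure P] [IsProbabilityMeasure Q]
    (hPQ : P ≪ Q)
    (β : ℝ) (hβ : 0 < β)
    (ℓ : Ω → ℝ) (hℓmeas : Measurable ℓ)
    (hexp : Integrable (fun ω => Real.exp (-β * ℓ ω)) Q)
    (hℓP : Integrable ℓ P)
    (hKL : Integrable (fun ω => Real.log ((P.rnDeriv Q ω).toReal)) P)
    (Z : ℝ) (hZ : Z = ∫ ω, Real.exp (-β * ℓ ω) ∂Q) :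
    0 < Z ∧
      ((-(1 / β) * Real.log Z
          - (1 / β) * ∫ ω, Real.log ((P.rnDeriv Q ω).toReal) ∂P
            = ∫ ω, ℓ ω ∂P)
        ↔ (∀ᵐ ω ∂Q, (P.rnDeriv Q ω).toReal = Real.exp (-β * ℓ ω) / Z)) :=
  gibbs_variational_principle_eq_iff_general P Q hPQ β hβ ℓ hexp hℓP hKL Z hZ
end

section
/- Let (Ξ, 𝒜, Q) be a probability space, U a nonempty compact topological space, S : U × Ξ → ℝ such that for each u ∈ U the map S(u, ·) is measurable, nonnegative, and Q-integrable, and r : U → ℝ nonnegative and continuous. Define F_β(u) := -(1/β)·log(∫ exp(-β·S(u,ξ)) dQ(ξ)) for β > 0, and assume that u ↦ ∫ S(u,ξ) dQ(ξ) is continuous on U and that u ↦ F_β(u) is continuous on U for each β > 0. Then sup_{β > 0} inf_{u ∈ U} (F_β(u) + r(u)) = inf_{u ∈ U} (∫ S(u,ξ) dQ(ξ) + r(u)); that is, the irreducible task cost at zero information budget equals the optimal open-loop task cost: J_irr(0) = J_ol. -/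
open MeasureTheory Real Topology Filter Set

/-!
By Jensen's inequality the free energy `F_β(u)` never exceeds the mean cost `∫ S(u, ·) dQ`, by
Lyapunov's inequality it decreases in `β`, and the bound `exp (-x) ≤ 1 - x + x min(x, 1)` with
dominated convergence shows `F_β(u) → ∫ S(u, ·) dQ` as `β → 0⁺`. Hence the continuous functions
`F_β + r` increase to `∫ S(·, ξ) dQ + r` as `β ↓ 0`, and a Dini-type compactness argument lets the
supremum over `β` pass through the infimum over `u`.
-/

theorem ciSup_ciInf_eq_ciInf_of_isLUB_of_directed {ι U : Type*} [Nonempty ι]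
    [TopologicalSpace U] [CompactSpace U] [Nonempty U]
    {g : ι → U → ℝ} {h : U → ℝ} (hg : ∀ i, LowerSemicontinuous (g i))
    (hdir : Directed (· ≤ ·) g) (hh : ∀ u, IsLUB (range fun i => g i u) (h u)) :
    ⨆ i, ⨅ u, g i u = ⨅ u, h u := by
  have hg_bdd : ∀ i, BddBelow (range (g i)) := fun i => by
    simpa only [image_univ] using
      ((hg i).lowerSemicontinuousOn univ).bddBelow_of_isCompact isCompact_univ
  have hg_le : ∀ i u, g i u ≤ h u := fun i u => (hh u).1 ⟨i, rfl⟩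
  have hinf_le : ∀ i, ⨅ u, g i u ≤ ⨅ u, h u := fun i => ciInf_mono (hg_bdd i) (hg_le i)
  have hh_bdd : BddBelow (range h) := by
    obtain ⟨i⟩ := ‹Nonempty ι›
    obtain ⟨c, hc⟩ := hg_bdd i
    exact ⟨c, by rintro _ ⟨u, rfl⟩; exact (hc ⟨u, rfl⟩).trans (hg_le i u)⟩
  refine le_antisymm (ciSup_le hinf_le) (le_of_forall_pos_le_add fun ε hε => ?_)
  -- Compactness: the increasing open sets `{g i > inf h - ε}` cover `U`, so one of them is `U`.
  obtain ⟨i, hi⟩ := isCompact_univ.elim_directed_cover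
    ((fun φ : U → ℝ => φ ⁻¹' Ioi ((⨅ u, h u) - ε)) ∘ g) (fun i => (hg i).isOpen_preimage _)
    (fun u _ => by
      have : (⨅ u, h u) - ε < h u := by linarith [ciInf_le hh_bdd u]
      obtain ⟨_, ⟨i, rfl⟩, hlt, -⟩ := (hh u).exists_between this
      exact mem_iUnion.2 ⟨i, hlt⟩)
    (hdir.mono_comp _ fun φ ψ hφψ u (hu : _ < φ u) => hu.trans_le (hφψ u))
  calc ⨅ u, h u ≤ (⨅ u, g i u) + ε := by
        have : (⨅ u, h u) - ε ≤ ⨅ u, g i u := le_ciInf fun u => le_of_lt (hi (mem_univ u))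
        linarith
    _ ≤ (⨆ i, ⨅ u, g i u) + ε := by
        gcongr
        exact le_ciSup ⟨⨅ u, h u, by rintro _ ⟨j, rfl⟩; exact hinf_le j⟩ i

theorem exp_neg_le_one_sub_add_mul_min {x : ℝ} (hx : 0 ≤ x) :
    exp (-x) ≤ 1 - x + x * min x 1 := by
  rcases le_total x 1 with h | h
  · have := (abs_le.1 (abs_exp_sub_one_sub_id_le (x := -x) (by rwa [abs_neg, abs_of_nonneg hx]))).2
    rw [min_eq_left h]
    nlinarith
  · rw [min_eq_right h]
    linarith [exp_le_one_iff.2 (neg_nonpos.2 hx)]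

theorem abs_mul_min_le {x β : ℝ} (hx : 0 ≤ x) (hβ : 0 ≤ β) : |x * min (β * x) 1| ≤ x := by
  have : 0 ≤ min (β * x) 1 := le_min (mul_nonneg hβ hx) zero_le_one
  rw [abs_of_nonneg (mul_nonneg hx this)]
  exact mul_le_of_le_one_right hx (min_le_right _ _)

section

variable {Ξ : Type*} [MeasurableSpace Ξ] {Q : Measure Ξ} {f : Ξ → ℝ} {β : ℝ}

theorem integrable_exp_neg_mul [IsFiniteMeasure Q] (hf : AEStronglyMeasurable f Q)
    (hnn : 0 ≤ᵐ[Q] f) (hβ : 0 ≤ β) : Integrable (fun ξ => exp (-β * f ξ)) Q := by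
  refine (integrable_const 1).mono' (continuous_exp.comp_aestronglyMeasurable
    (hf.const_mul (-β))) ?_
  filter_upwards [hnn] with ξ hξ
  rw [norm_of_nonneg (exp_pos _).le, exp_le_one_iff, neg_mul, neg_nonpos]
  exact mul_nonneg hβ hξ

theorem tendsto_integral_mul_min_nhdsGT_zero (hf : Integrable f Q) (hnn : 0 ≤ᵐ[Q] f) :
    Tendsto (fun β => ∫ ξ, f ξ * min (β * f ξ) 1 ∂Q) (𝓝[>] 0) (𝓝 0) := by
  suffices Tendsto (fun β => ∫ ξ, f ξ * min (β * f ξ) 1 ∂Q) (𝓝[>] 0)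
      (𝓝 (∫ ξ, f ξ * min (0 * f ξ) 1 ∂Q)) by simpa using this
  refine tendsto_integral_filter_of_dominated_convergence f
    (.of_forall fun β => by fun_prop) ?_ hf (.of_forall fun ξ => ?_)
  · filter_upwards [self_mem_nhdsWithin] with β (hβ : 0 < β)
    filter_upwards [hnn] with ξ hξ using abs_mul_min_le hξ hβ.le
  · exact (Continuous.tendsto (by fun_prop) 0).mono_left nhdsWithin_le_nhds

end

noncomputable def freeEnergy {Ξ : Type*} [MeasurableSpace Ξ] (Q : Measure Ξ) (f : Ξ → ℝ)
    (β : ℝ) : ℝ :=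
  -(1 / β) * log (∫ ξ, exp (-β * f ξ) ∂Q)

namespace freeEnergy

variable {Ξ : Type*} [MeasurableSpace Ξ] {Q : Measure Ξ} [IsProbabilityMeasure Q] {f : Ξ → ℝ}
  {β : ℝ}

theorem le_integral (hf : Integrable f Q) (hnn : 0 ≤ᵐ[Q] f) (hβ : 0 < β) :
    freeEnergy Q f β ≤ ∫ ξ, f ξ ∂Q := by
  have hI := integrable_exp_neg_mul hf.aestronglyMeasurable hnn hβ.le
  have hjensen : exp (∫ ξ, -β * f ξ ∂Q) ≤ ∫ ξ, exp (-β * f ξ) ∂Q :=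
    convexOn_exp.map_integral_le continuous_exp.continuousOn isClosed_univ
      (.of_forall fun _ => mem_univ _) (hf.const_mul (-β)) hI
  rw [integral_const_mul, ← le_log_iff_exp_le (integral_exp_pos hI)] at hjensen
  rw [freeEnergy, neg_mul, neg_le, one_div, le_inv_mul_iff₀ hβ]
  linarith

theorem antitoneOn (hf : AEStronglyMeasurable f Q) (hnn : 0 ≤ᵐ[Q] f) :
    AntitoneOn (freeEnergy Q f) (Ioi 0) := by
  intro a (ha : 0 < a) b (hb : 0 < b) hab
  have hIa := integrable_exp_neg_mul hf hnn ha.le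
  have hIb := integrable_exp_neg_mul hf hnn hb.le
  have hp : a / b ∈ Icc (0 : ℝ) 1 := ⟨by positivity, (div_le_one hb).2 hab⟩
  have hpow : ∀ ξ, exp (-b * f ξ) ^ (a / b) = exp (-a * f ξ) := fun ξ => by
    rw [← exp_mul]; field_simp
  -- Jensen for the concave map `x ↦ x ^ (a / b)` applied to `exp (-b f)`.
  have hjensen : ∫ ξ, exp (-a * f ξ) ∂Q ≤ (∫ ξ, exp (-b * f ξ) ∂Q) ^ (a / b) := by
    simpa only [hpow] using (concaveOn_rpow hp.1 hp.2).le_map_integral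
      (continuousOn_id.rpow_const fun _ _ => Or.inr hp.1) isClosed_Ici
      (.of_forall fun ξ => (exp_pos (-b * f ξ)).le) hIb
      (by simp only [Function.comp_def, hpow]; exact hIa)
  have hlog := log_le_log (integral_exp_pos hIa) hjensen
  rw [log_rpow (integral_exp_pos hIb)] at hlog
  rw [freeEnergy, freeEnergy, neg_mul, neg_mul, neg_le_neg_iff, one_div, one_div,
    inv_mul_le_iff₀ ha]
  exact hlog.trans_eq (by ring)

theorem integral_sub_integral_mul_min_le (hf : Integrable f Q) (hnn : 0 ≤ᵐ[Q] f) (hβ : 0 < β) :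
    ∫ ξ, f ξ ∂Q - ∫ ξ, f ξ * min (β * f ξ) 1 ∂Q ≤ freeEnergy Q f β := by
  have hI := integrable_exp_neg_mul hf.aestronglyMeasurable hnn hβ.le
  have hE : Integrable (fun ξ => f ξ * min (β * f ξ) 1) Q :=
    hf.mono' (by fun_prop) (by filter_upwards [hnn] with ξ hξ using abs_mul_min_le hξ hβ.le)
  have h1 : Integrable (fun ξ => 1 - β * f ξ) Q := (integrable_const 1).sub (hf.const_mul β)
  have h2 : Integrable (fun ξ => β * (f ξ * min (β * f ξ) 1)) Q := hE.const_mul β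
  have hbound : ∫ ξ, exp (-β * f ξ) ∂Q ≤
      1 - β * ∫ ξ, f ξ ∂Q + β * ∫ ξ, f ξ * min (β * f ξ) 1 ∂Q := by
    calc ∫ ξ, exp (-β * f ξ) ∂Q
        ≤ ∫ ξ, (1 - β * f ξ + β * (f ξ * min (β * f ξ) 1)) ∂Q := by
          refine integral_mono_ae hI (h1.add h2) ?_
          filter_upwards [hnn] with ξ hξ
          have := exp_neg_le_one_sub_add_mul_min (mul_nonneg hβ.le hξ)
          rw [neg_mul]
          linarith [mul_assoc β (f ξ) (min (β * f ξ) 1)]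
      _ = _ := by
          rw [integral_add h1 h2,
            integral_sub (integrable_const 1) (hf.const_mul β), integral_const_mul,
            integral_const_mul, integral_const]
          simp
  have hlog := (log_le_sub_one_of_pos (integral_exp_pos hI)).trans (by linarith [hbound] :
    _ ≤ β * ∫ ξ, f ξ * min (β * f ξ) 1 ∂Q - β * ∫ ξ, f ξ ∂Q)
  rw [freeEnergy, neg_mul, le_neg, one_div, inv_mul_le_iff₀ hβ]
  linarith

theorem tendsto_nhdsGT_zero (hf : Integrable f Q) (hnn : 0 ≤ᵐ[Q] f) :
    Tendsto (freeEnergy Q f) (𝓝[>] 0) (𝓝 (∫ ξ, f ξ ∂Q)) := by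
  have hlower : Tendsto (fun β => ∫ ξ, f ξ ∂Q - ∫ ξ, f ξ * min (β * f ξ) 1 ∂Q) (𝓝[>] 0)
      (𝓝 (∫ ξ, f ξ ∂Q)) := by
    simpa using tendsto_const_nhds.sub (tendsto_integral_mul_min_nhdsGT_zero hf hnn)
  refine tendsto_of_tendsto_of_tendsto_of_le_of_le' hlower tendsto_const_nhds ?_ ?_ <;>
    filter_upwards [self_mem_nhdsWithin] with β (hβ : 0 < β)
  exacts [integral_sub_integral_mul_min_le hf hnn hβ, le_integral hf hnn hβ]

end freeEnergy

theorem Jirr_zero_eq_Jol_general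
    {Ξ U : Type*} [MeasurableSpace Ξ]
    [TopologicalSpace U] [CompactSpace U] [Nonempty U]
    (Q : Measure Ξ) [IsProbabilityMeasure Q]
    (S : U → Ξ → ℝ) (r : U → ℝ)
    (hSnn : ∀ u ξ, 0 ≤ S u ξ)
    (hSint : ∀ u, Integrable (S u) Q)
    (hrcont : Continuous r)
    (hF_cont : ∀ β : ℝ, 0 < β →
      Continuous (fun u => -(1 / β) * Real.log (∫ ξ, Real.exp (-β * S u ξ) ∂Q))) :
    (⨆ β : {b : ℝ // 0 < b},
        ⨅ u : U, (-(1 / β.1) * Real.log (∫ ξ, Real.exp (-β.1 * S u ξ) ∂Q) + r u))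
      = ⨅ u : U, (∫ ξ, S u ξ ∂Q + r u) := by
  have hnn : ∀ u, 0 ≤ᵐ[Q] S u := fun u => .of_forall (hSnn u)
  have hlub : ∀ u, IsLUB (range fun β : {b : ℝ // 0 < b} => freeEnergy Q (S u) β + r u)
      (∫ ξ, S u ξ ∂Q + r u) := fun u =>
    isLUB_of_mem_closure
      (by rintro _ ⟨β, rfl⟩; exact add_le_add_left (freeEnergy.le_integral (hSint u) (hnn u) β.2) _)
      (mem_closure_of_tendsto ((freeEnergy.tendsto_nhdsGT_zero (hSint u) (hnn u)).add_const (r u))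
        (eventually_mem_nhdsWithin.mono fun β hβ => ⟨⟨β, hβ⟩, rfl⟩))
  have hanti : Antitone fun (β : {b : ℝ // 0 < b}) u => freeEnergy Q (S u) β + r u :=
    fun β₁ β₂ h u => add_le_add_left ((freeEnergy.antitoneOn (hSint u).1 (hnn u)) β₁.2 β₂.2 h) _
  exact ciSup_ciInf_eq_ciInf_of_isLUB_of_directed
    (fun β => ((hF_cont β.1 β.2).add hrcont).lowerSemicontinuous) hanti.directed_le hlub

/-- **Zero-information budget recovers the open-loop cost.** On a probability space `(Ξ, Q)`
with a nonempty compact control space `U`, state cost `S` (measurable, nonnegative,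
integrable in `ξ` for each `u`) and a nonnegative continuous control cost `r`, if the mean
cost `u ↦ ∫ S(u, ξ) dQ` and each free energy `u ↦ F_β(u)` are continuous, then
`sup_{β > 0} inf_u (F_β(u) + r u) = inf_u (∫ S(u, ξ) dQ + r u)`, i.e. `J_irr(0) = J_ol`. -/
theorem Jirr_zero_eq_Jol
    {Ξ U : Type*} [MeasurableSpace Ξ]
    [TopologicalSpace U] [CompactSpace U] [Nonempty U]
    (Q : Measure Ξ) [IsProbabilityMeasure Q]
    (S : U → Ξ → ℝ) (r : U → ℝ)
    (hSmeas : ∀ u, Measurable (S u))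
    (hSnn : ∀ u ξ, 0 ≤ S u ξ)
    (hSint : ∀ u, Integrable (S u) Q)
    (hrnn : ∀ u, 0 ≤ r u) (hrcont : Continuous r)
    (hmean_cont : Continuous (fun u => ∫ ξ, S u ξ ∂Q))
    (hF_cont : ∀ β : ℝ, 0 < β →
      Continuous (fun u => -(1 / β) * Real.log (∫ ξ, Real.exp (-β * S u ξ) ∂Q))) :
    (⨆ β : {b : ℝ // 0 < b},
        ⨅ u : U, (-(1 / β.1) * Real.log (∫ ξ, Real.exp (-β.1 * S u ξ) ∂Q) + r u))
      = ⨅ u : U, (∫ ξ, S u ξ ∂Q + r u) :=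
  Jirr_zero_eq_Jol_general Q S r hSnn hSint hrcont hF_cont
end
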